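/- Let q be a prime power, m a divisor of q−1, and π a (q−1,m)-piecewise affine permutation with principal product P and principal sum S. Then every cycle of π has length equal to the prime ℓ if and only if ℓ = m, P ≡ 1 (mod (q−1)/m), and S ≡ 0 (mod q−1). In that case π decomposes into exactly (q−1)/m cycles, each of length m. -/

import Mathlib

/-! Along an orbit of `π` the class `Ψ_m(x)` runs through the cycle `c₀, c₁, …, c_{m-1}` one step
at a time. Hence `m` divides every cycle length, and every orbit passes through a multiple of `m`,
so all cycles have length exactly `m` iff `π^[m]` fixes the multiples of `m`. There `π^[m]` is
`x ↦ P x + S mod (q - 1)`; evaluating at `x = q - 1` and `x = m` turns this into `S ≡ 0` and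
`P ≡ 1 (mod (q - 1)/m)`. A prime cycle length `ℓ` is a multiple of `m > 1`, hence equals `m`. -/

/-- `psi k x` is the representative of `x` mod `k` in `[1, k]`. -/
def psi (k x : ℕ) : ℕ := if x % k = 0 then k else x % k

/-- `π` is an `(n,m)`-piecewise affine permutation of `[1,n]` with parameters
`(a, b, c)`: it permutes `[1,n]` (and is the identity elsewhere), the entries of
`a, b` lie in `[1,n]`, the entries of `c` form a permutation of `[1,m]`, and for
`x ∈ [1,n]` with `Ψ_m(x) = c_i` one has `π(x) = Ψ_n(a_i x + b_i)` and
`Ψ_m(π(x)) = c_{i+1}`, indices cyclic modulo `m`. -/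
def IsPAP (n m : ℕ) [NeZero m] (a b c : Fin m → ℕ) (π : ℕ → ℕ) : Prop :=
  Set.BijOn π (Set.Icc 1 n) (Set.Icc 1 n) ∧
  (∀ x : ℕ, x ∉ Set.Icc 1 n → π x = x) ∧
  (∀ i, a i ∈ Set.Icc 1 n) ∧ (∀ i, b i ∈ Set.Icc 1 n) ∧
  (∀ i, c i ∈ Set.Icc 1 m) ∧ Function.Injective c ∧
  ∀ x ∈ Set.Icc 1 n, ∀ i, psi m x = c i →
    π x = psi n (a i * x + b i) ∧ psi m (π x) = c (i + 1)

theorem psi_modEq (k x : ℕ) : psi k x ≡ x [MOD k] := by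
  unfold psi
  split_ifs with h
  · simp [Nat.ModEq, h]
  · exact Nat.mod_modEq x k

theorem psi_mem_Icc {k : ℕ} (hk : 0 < k) (x : ℕ) : psi k x ∈ Set.Icc 1 k := by
  unfold psi
  split_ifs with h
  · exact ⟨hk, le_rfl⟩
  · exact ⟨Nat.one_le_iff_ne_zero.2 h, (Nat.mod_lt _ hk).le⟩

theorem Nat.ModEq.eq_of_mem_Icc {k x y : ℕ} (h : x ≡ y [MOD k]) (hx : x ∈ Set.Icc 1 k)
    (hy : y ∈ Set.Icc 1 k) : x = y := by
  obtain ⟨hx1, hxk⟩ := hx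
  obtain ⟨hy1, hyk⟩ := hy
  rcases le_total x y with hxy | hyx
  · have := Nat.eq_zero_of_dvd_of_lt ((Nat.modEq_iff_dvd' hxy).1 h) (by omega)
    omega
  · have := Nat.eq_zero_of_dvd_of_lt ((Nat.modEq_iff_dvd' hyx).1 h.symm) (by omega)
    omega

theorem psi_eq_iff {k x y : ℕ} (hx : x ∈ Set.Icc 1 k) : psi k y = x ↔ y ≡ x [MOD k] :=
  ⟨fun h => h ▸ (psi_modEq k y).symm,
    fun h => ((psi_modEq k y).trans h).eq_of_mem_Icc (psi_mem_Icc (hx.1.trans hx.2) y) hx⟩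

theorem dvd_of_psi_eq_self {k x : ℕ} (hk : 0 < k) (h : psi k x = k) : k ∣ x :=
  Nat.modEq_zero_iff_dvd.1 (((psi_eq_iff ⟨hk, le_rfl⟩).1 h).trans (Nat.mod_self k))

theorem affine_modEq_self_on_multiples_iff {n m P S : ℕ} (hn : 0 < n) (hmn : m ∣ n) :
    (∀ x ∈ Set.Icc 1 n, m ∣ x → P * x + S ≡ x [MOD n]) ↔
      P ≡ 1 [MOD n / m] ∧ S ≡ 0 [MOD n] := by
  have hm : 0 < m := Nat.pos_of_dvd_of_pos hmn hn
  have hmod : n / m * m = n := Nat.div_mul_cancel hmn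
  constructor
  · intro h
    have hS : S ≡ 0 [MOD n] := by
      have := h n ⟨hn, le_rfl⟩ hmn
      simpa [Nat.ModEq, Nat.add_mod] using this
    refine ⟨Nat.ModEq.mul_right_cancel' hm.ne' ?_, hS⟩
    rw [hmod, one_mul]
    exact hS.add_right_cancel (h m ⟨hm, Nat.le_of_dvd hn hmn⟩ dvd_rfl)
  · rintro ⟨hP, hS⟩ x - ⟨t, rfl⟩
    have hPm : P * m ≡ 1 * m [MOD n] := hmod ▸ hP.mul_right' m
    simpa [mul_assoc] using (hPm.mul_right t).add hS

open Fin.NatCast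

namespace IsPAP

variable {n m : ℕ} [NeZero m] {a b c : Fin m → ℕ} {π : ℕ → ℕ}

theorem injective (h : IsPAP n m a b c π) : π.Injective := by
  intro x y hxy
  by_cases hx : x ∈ Set.Icc 1 n <;> by_cases hy : y ∈ Set.Icc 1 n
  · exact h.1.injOn hx hy hxy
  · have hπx := h.1.mapsTo hx
    rw [hxy, h.2.1 y hy] at hπx
    exact absurd hπx hy
  · have hπy := h.1.mapsTo hy
    rw [← hxy, h.2.1 x hx] at hπy
    exact absurd hπy hx
  · rwa [h.2.1 x hx, h.2.1 y hy] at hxy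

theorem exists_eq_psi (h : IsPAP n m a b c π) (x : ℕ) : ∃ i, c i = psi m x := by
  have hsurj : Set.SurjOn c (Finset.univ : Finset (Fin m)) (Finset.Icc 1 m) :=
    Finset.surjOn_of_injOn_of_card_le c (fun i _ => Finset.mem_Icc.2 (h.2.2.2.2.1 i))
      h.2.2.2.2.2.1.injOn (by simp)
  obtain ⟨i, -, hi⟩ := hsurj (by simpa using psi_mem_Icc (NeZero.pos m) x)
  exact ⟨i, hi⟩

theorem psi_iterate (h : IsPAP n m a b c π) {x : ℕ} (hx : x ∈ Set.Icc 1 n) {i : Fin m}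
    (hi : psi m x = c i) (j : ℕ) : psi m (π^[j] x) = c (i + j) := by
  induction j with
  | zero => simpa using hi
  | succ j ih =>
    rw [Function.iterate_succ_apply', (h.2.2.2.2.2.2 _ (h.1.mapsTo.iterate j hx) _ ih).2,
      Nat.cast_succ, add_assoc]

theorem dvd_of_isPeriodicPt (h : IsPAP n m a b c π) {x T : ℕ} (hx : x ∈ Set.Icc 1 n)
    (hT : Function.IsPeriodicPt π T x) : m ∣ T := by
  obtain ⟨i, hi⟩ := h.exists_eq_psi x
  have hshift : c (i + T) = c i := by rw [← h.psi_iterate hx hi.symm T, hT.eq, hi]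
  exact Fin.natCast_eq_zero.1 (add_eq_left.1 (h.2.2.2.2.2.1 hshift))

theorem dvd_minimalPeriod (h : IsPAP n m a b c π) {x : ℕ} (hx : x ∈ Set.Icc 1 n) :
    m ∣ Function.minimalPeriod π x :=
  h.dvd_of_isPeriodicPt hx (Function.isPeriodicPt_minimalPeriod π x)

theorem exists_dvd_iterate (h : IsPAP n m a b c π) {x : ℕ} (hx : x ∈ Set.Icc 1 n) :
    ∃ j, m ∣ π^[j] x := by
  obtain ⟨i, hi⟩ := h.exists_eq_psi x
  obtain ⟨i', hi'⟩ := h.exists_eq_psi m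
  refine ⟨(i' - i : Fin m).val, dvd_of_psi_eq_self (NeZero.pos m) ?_⟩
  rw [h.psi_iterate hx hi.symm, Fin.cast_val_eq_self, add_sub_cancel, hi']
  exact (psi_eq_iff ⟨NeZero.pos m, le_rfl⟩).2 rfl

theorem iterate_eq_self_of_forall_dvd (h : IsPAP n m a b c π)
    (hfix : ∀ y ∈ Set.Icc 1 n, m ∣ y → π^[m] y = y) {x : ℕ} (hx : x ∈ Set.Icc 1 n) :
    π^[m] x = x := by
  obtain ⟨j, hj⟩ := h.exists_dvd_iterate hx
  apply h.injective.iterate j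
  rw [← Function.iterate_add_apply, add_comm, Function.iterate_add_apply,
    hfix _ (h.1.mapsTo.iterate j hx) hj]

theorem forall_minimalPeriod_eq_iff (h : IsPAP n m a b c π) :
    (∀ x ∈ Set.Icc 1 n, Function.minimalPeriod π x = m) ↔
      ∀ x ∈ Set.Icc 1 n, m ∣ x → π^[m] x = x := by
  refine ⟨fun hper x hx _ => hper x hx ▸ Function.iterate_minimalPeriod, fun hfix x hx => ?_⟩
  exact Nat.dvd_antisymm
    (Function.IsPeriodicPt.minimalPeriod_dvd (h.iterate_eq_self_of_forall_dvd hfix hx))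
    (h.dvd_minimalPeriod hx)

end IsPAP

theorem pap_prime_cycles_general (q : ℕ)
    (m : ℕ) [NeZero m] (hm : 1 < m) (hmq : m ∣ q - 1) (ℓ : ℕ) (hℓ : ℓ.Prime)
    (a b c : Fin m → ℕ) (π : ℕ → ℕ) (hpap : IsPAP (q - 1) m a b c π)
    (P S : ℕ) (hSmem : S ∈ Set.Icc 1 (q - 1))
    (hS : ∀ x ∈ Set.Icc 1 (q - 1), m ∣ x → π^[m] x = psi (q - 1) (P * x + S)) :
    ((∀ x ∈ Set.Icc 1 (q - 1), Function.minimalPeriod π x = ℓ) ↔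
      (ℓ = m ∧ P ≡ 1 [MOD (q - 1) / m] ∧ S ≡ 0 [MOD q - 1])) ∧
    ((ℓ = m ∧ P ≡ 1 [MOD (q - 1) / m] ∧ S ≡ 0 [MOD q - 1]) →
      ((Finset.Icc 1 (q - 1)).filter
          (fun x => m ∣ x ∧ Function.minimalPeriod π x = m)).card = (q - 1) / m) := by
  have hn : 0 < q - 1 := hSmem.1.trans hSmem.2
  have hperiod_iff : (∀ x ∈ Set.Icc 1 (q - 1), Function.minimalPeriod π x = m) ↔
      P ≡ 1 [MOD (q - 1) / m] ∧ S ≡ 0 [MOD q - 1] := by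
    rw [hpap.forall_minimalPeriod_eq_iff, ← affine_modEq_self_on_multiples_iff hn hmq]
    refine forall₂_congr fun x hx => imp_congr_right fun hdvd => ?_
    rw [hS x hx hdvd, psi_eq_iff hx]
  refine ⟨⟨fun hper => ?_, fun ⟨hℓm, hcond⟩ => hℓm ▸ hperiod_iff.2 hcond⟩,
    fun ⟨_, hcond⟩ => ?_⟩
  · have hmℓ : m ∣ ℓ := hper (q - 1) ⟨hn, le_rfl⟩ ▸ hpap.dvd_minimalPeriod ⟨hn, le_rfl⟩
    obtain rfl : ℓ = m := ((hℓ.eq_one_or_self_of_dvd m hmℓ).resolve_left hm.ne').symm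
    exact ⟨rfl, hperiod_iff.1 hper⟩
  · have hper := hperiod_iff.2 hcond
    rw [Finset.filter_congr fun x hx => and_iff_left (hper x (by simpa using hx)),
      show Finset.Icc 1 (q - 1) = Finset.Ioc 0 (q - 1) from Finset.Icc_add_one_left_eq_Ioc 0 _]
    exact Nat.Ioc_filter_dvd_card_eq_div (q - 1) m

/-- A `(q-1,m)`-p.a.p. `π` has all cycles of prime length `ℓ` iff `ℓ = m`,
`P ≡ 1 (mod (q-1)/m)` and `S ≡ 0 (mod q-1)`; in that case `π` decomposes into
exactly `(q-1)/m` cycles of length `m` (counted by the multiples of `m` lying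
in cycles of length `m`, one per cycle). -/
theorem pap_prime_cycles (q : ℕ) (hq : ∃ p k : ℕ, p.Prime ∧ 0 < k ∧ q = p ^ k)
    (m : ℕ) [NeZero m] (hm : 1 < m) (hmq : m ∣ q - 1) (ℓ : ℕ) (hℓ : ℓ.Prime)
    (a b c : Fin m → ℕ) (π : ℕ → ℕ) (hpap : IsPAP (q - 1) m a b c π)
    (P S : ℕ) (hP : P = ∏ i, a i) (hSmem : S ∈ Set.Icc 1 (q - 1))
    (hS : ∀ x ∈ Set.Icc 1 (q - 1), m ∣ x → π^[m] x = psi (q - 1) (P * x + S)) :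
    ((∀ x ∈ Set.Icc 1 (q - 1), Function.minimalPeriod π x = ℓ) ↔
      (ℓ = m ∧ P ≡ 1 [MOD (q - 1) / m] ∧ S ≡ 0 [MOD q - 1])) ∧
    ((ℓ = m ∧ P ≡ 1 [MOD (q - 1) / m] ∧ S ≡ 0 [MOD q - 1]) →
      ((Finset.Icc 1 (q - 1)).filter
          (fun x => m ∣ x ∧ Function.minimalPeriod π x = m)).card = (q - 1) / m) :=
  pap_prime_cycles_general q m hm hmq ℓ hℓ a b c π hpap P S hSmem hS
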